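/- arXiv:1610.01205 — 3 statements merged into one kernel-verified Lean document; each statement's English description precedes it below -/
import Mathlib

section
/- Let x, y, z be (jointly distributed) real random variables with joint probability density ρ(x,y,z) = (1/(4π)) · e^{−|(x,y,z)|} / |(x,y,z)| on ℝ³, where |(x,y,z)| = √(x²+y²+z²). Then E|2xz − y²| = 4√2 − 2. -/
/-!
The substitution `u = (x + z)/√2`, `w = (x - z)/√2` is an orthogonal reflection that turns
`2xz - y²` into `u² - (y² + w²)` and keeps the density radial. Polar coordinates `(s, ·)` in the
`(y, w)`-plane and then `(r, θ)` in the `(u, s)`-plane (spherical coordinates about the `u`-axis)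
separate the integral of `|u² - s²|` against a radial weight `φ(r²)` into
`π · ∫_{-π}^{π} |sin θ cos 2θ| dθ · ∫₀^∞ r⁴ φ(r²) dr`.
The angular factor is `(8√2 - 4)/3`, from the antiderivative `cos θ - (2/3) cos³ θ` on the
intervals where `sin θ cos 2θ` keeps its sign; for `φ(t) = e^{-√t}/(4π√t)` the radial factor is
`Γ(4)/(4π) = 3/(2π)`. Working with lower Lebesgue integrals of the nonnegative integrand makes
Tonelli's theorem available without integrability side conditions.
-/

open Real MeasureTheory Set
open scoped ENNReal

theorem LinearMap.measurePreserving_of_involutive {E : Type*} [NormedAddCommGroup E]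
    [NormedSpace ℝ E] [MeasurableSpace E] [BorelSpace E] [FiniteDimensional ℝ E]
    (μ : Measure E) [μ.IsAddHaarMeasure] {f : E →ₗ[ℝ] E} (hf : Function.Involutive f) :
    MeasurePreserving f μ μ := by
  have hdet : LinearMap.det f * LinearMap.det f = 1 := by
    rw [← LinearMap.det_comp, show f ∘ₗ f = LinearMap.id from LinearMap.ext hf, LinearMap.det_id]
  have habs : |(LinearMap.det f)⁻¹| = 1 := by
    rw [abs_inv, inv_eq_one, ← pow_eq_one_iff_of_nonneg (abs_nonneg _) two_ne_zero, sq_abs, sq,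
      hdet]
  refine ⟨f.continuous_of_finiteDimensional.measurable, ?_⟩
  rw [Measure.map_linearMap_addHaar_eq_smul_addHaar μ (left_ne_zero_of_mul_eq_one hdet), habs,
    ENNReal.ofReal_one, one_smul]

theorem lintegral_comp_abs (f : ℝ → ℝ≥0∞) : ∫⁻ x, f |x| = 2 * ∫⁻ x in Ioi 0, f x := by
  have hpos : ∫⁻ x in Ioi 0, f |x| = ∫⁻ x in Ioi 0, f x :=
    setLIntegral_congr_fun measurableSet_Ioi fun x hx => by rw [abs_of_pos hx]
  have hneg : ∫⁻ x in Iic 0, f |x| = ∫⁻ x in Ioi 0, f |x| := by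
    rw [← (Measure.measurePreserving_neg volume).setLIntegral_comp_preimage_emb
      (Homeomorph.neg ℝ).measurableEmbedding]
    simpa using setLIntegral_congr Ioi_ae_eq_Ici.symm
  rw [← lintegral_add_compl _ measurableSet_Ioi, compl_Ioi, hneg, hpos, two_mul]

theorem lintegral_eq_lintegral_mul_lintegral_of_polarCoord {F : ℝ × ℝ → ℝ≥0∞}
    {a b : ℝ → ℝ≥0∞} (ha : Measurable a) (hb : Measurable b)
    (hF : ∀ r > 0, ∀ θ, ENNReal.ofReal r * F (polarCoord.symm (r, θ)) = a r * b θ) :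
    ∫⁻ q, F q = (∫⁻ r in Ioi 0, a r) * ∫⁻ θ in Ioo (-π) π, b θ := by
  have hEq : EqOn (fun p : ℝ × ℝ => ENNReal.ofReal p.1 • F (polarCoord.symm p))
      (fun p => a p.1 * b p.2) polarCoord.target := fun p hp => hF p.1 hp.1 p.2
  rw [← lintegral_comp_polarCoord_symm,
    setLIntegral_congr_fun polarCoord.open_target.measurableSet hEq, polarCoord_target,
    Measure.volume_eq_prod, ← Measure.prod_restrict,
    lintegral_prod_mul ha.aemeasurable hb.aemeasurable]

theorem lintegral_comp_sq_add_sq {g : ℝ → ℝ≥0∞} (hg : Measurable g) :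
    ∫⁻ q : ℝ × ℝ, g (q.1 ^ 2 + q.2 ^ 2)
      = ENNReal.ofReal π * ∫⁻ s, ENNReal.ofReal |s| * g (s ^ 2) := by
  have hradial : ∀ r > 0, ∀ θ, ENNReal.ofReal r *
      g ((polarCoord.symm (r, θ)).1 ^ 2 + (polarCoord.symm (r, θ)).2 ^ 2)
      = ENNReal.ofReal r * g (r ^ 2) * 1 := by
    intro r _ θ
    simp only [polarCoord_symm_apply, mul_one]
    congr 2
    linear_combination r ^ 2 * cos_sq_add_sin_sq θ
  have habs : ∀ s : ℝ, ENNReal.ofReal |s| * g (s ^ 2) = ENNReal.ofReal |s| * g (|s| ^ 2) := by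
    simp
  rw [lintegral_eq_lintegral_mul_lintegral_of_polarCoord (by fun_prop) measurable_const hradial,
    lintegral_congr habs, lintegral_comp_abs (fun s => ENNReal.ofReal s * g (s ^ 2))]
  simp only [lintegral_const, Measure.restrict_apply MeasurableSet.univ, univ_inter, volume_Ioo,
    sub_neg_eq_add, one_mul]
  rw [← two_mul, ENNReal.ofReal_mul zero_le_two, ENNReal.ofReal_ofNat]
  ring

theorem hasDerivAt_cos_sub_cos_pow_three (θ : ℝ) :
    HasDerivAt (fun t => cos t - 2 / 3 * cos t ^ 3) (sin θ * cos (2 * θ)) θ := by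
  refine ((hasDerivAt_cos θ).sub (((hasDerivAt_cos θ).pow 3).const_mul (2 / 3 : ℝ))).congr_deriv ?_
  rw [cos_two_mul]
  push_cast
  ring

theorem intervalIntegral.integral_abs_eq_sub_of_hasDerivAt_of_nonneg {F f : ℝ → ℝ} {a b : ℝ}
    (hab : a ≤ b) (hF : ∀ x, HasDerivAt F (f x) x) (hf : Continuous f)
    (hpos : ∀ x ∈ Icc a b, 0 ≤ f x) :
    ∫ x in a..b, |f x| = F b - F a := by
  rw [intervalIntegral.integral_congr fun x hx => abs_of_nonneg (hpos x (uIcc_of_le hab ▸ hx))]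
  exact intervalIntegral.integral_eq_sub_of_hasDerivAt (fun x _ => hF x) (hf.intervalIntegrable a b)

theorem intervalIntegral.integral_abs_eq_sub_of_hasDerivAt_of_nonpos {F f : ℝ → ℝ} {a b : ℝ}
    (hab : a ≤ b) (hF : ∀ x, HasDerivAt F (f x) x) (hf : Continuous f)
    (hneg : ∀ x ∈ Icc a b, f x ≤ 0) :
    ∫ x in a..b, |f x| = F a - F b := by
  have := integral_abs_eq_sub_of_hasDerivAt_of_nonneg hab (fun x => (hF x).neg) hf.neg
    fun x hx => neg_nonneg.mpr (hneg x hx)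
  simp only [abs_neg, Pi.neg_apply] at this
  rw [this]
  ring

theorem intervalIntegral.integral_abs_sin_mul_cos_two_mul :
    ∫ θ in 0..π, |sin θ * cos (2 * θ)| = (4 * √2 - 2) / 3 := by
  set F : ℝ → ℝ := fun t => cos t - 2 / 3 * cos t ^ 3
  have hcont : Continuous fun θ => sin θ * cos (2 * θ) := by fun_prop
  have hint : ∀ a b, IntervalIntegrable (fun θ => |sin θ * cos (2 * θ)|) volume a b :=
    fun a b => hcont.abs.intervalIntegrable a b
  have hπ := pi_pos
  have h₁ : ∫ θ in 0..π / 4, |sin θ * cos (2 * θ)| = F (π / 4) - F 0 :=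
    integral_abs_eq_sub_of_hasDerivAt_of_nonneg (by positivity)
      hasDerivAt_cos_sub_cos_pow_three hcont fun θ hθ => mul_nonneg
        (sin_nonneg_of_nonneg_of_le_pi hθ.1 (by linarith [hθ.2]))
        (cos_nonneg_of_mem_Icc ⟨by linarith [hθ.1], by linarith [hθ.2]⟩)
  have h₂ : ∫ θ in π / 4..3 * π / 4, |sin θ * cos (2 * θ)| = F (π / 4) - F (3 * π / 4) :=
    integral_abs_eq_sub_of_hasDerivAt_of_nonpos (by linarith)
      hasDerivAt_cos_sub_cos_pow_three hcont fun θ hθ => mul_nonpos_of_nonneg_of_nonpos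
        (sin_nonneg_of_nonneg_of_le_pi (by linarith [hθ.1]) (by linarith [hθ.2]))
        (cos_nonpos_of_pi_div_two_le_of_le (by linarith [hθ.1]) (by linarith [hθ.2]))
  have h₃ : ∫ θ in 3 * π / 4..π, |sin θ * cos (2 * θ)| = F π - F (3 * π / 4) :=
    integral_abs_eq_sub_of_hasDerivAt_of_nonneg (by linarith)
      hasDerivAt_cos_sub_cos_pow_three hcont fun θ hθ => mul_nonneg
        (sin_nonneg_of_nonneg_of_le_pi (by linarith [hθ.1]) hθ.2)
        (by rw [← cos_sub_two_pi]
            exact cos_nonneg_of_mem_Icc ⟨by linarith [hθ.1], by linarith [hθ.2]⟩)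
  have hcos : cos (3 * π / 4) = -cos (π / 4) := by
    rw [show 3 * π / 4 = π - π / 4 by ring, cos_pi_sub]
  rw [← integral_add_adjacent_intervals (hint 0 (π / 4)) (hint _ _),
    ← integral_add_adjacent_intervals (hint (π / 4) (3 * π / 4)) (hint _ π), h₁, h₂, h₃]
  simp only [F, hcos, cos_pi_div_four, cos_zero, cos_pi]
  linear_combination (-√2 / 3) * sq_sqrt (zero_le_two : (0 : ℝ) ≤ 2)

theorem lintegral_ofReal_abs_sin_mul_cos_two_mul :
    ∫⁻ θ in Ioo (-π) π, ENNReal.ofReal |sin θ * cos (2 * θ)|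
      = ENNReal.ofReal ((8 * √2 - 4) / 3) := by
  have hcont : Continuous fun θ => |sin θ * cos (2 * θ)| := by fun_prop
  have heven : ∫ θ in -π..0, |sin θ * cos (2 * θ)| = ∫ θ in 0..π, |sin θ * cos (2 * θ)| := by
    simpa [mul_neg] using
      (intervalIntegral.integral_comp_neg (a := 0) (b := π) fun θ => |sin θ * cos (2 * θ)|).symm
  have hintegral : ∫ θ in Ioo (-π) π, |sin θ * cos (2 * θ)| = (8 * √2 - 4) / 3 := by
    rw [← integral_Ioc_eq_integral_Ioo, ← intervalIntegral.integral_of_le (by linarith [pi_pos]),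
      ← intervalIntegral.integral_add_adjacent_intervals (hcont.intervalIntegrable _ 0)
        (hcont.intervalIntegrable 0 _), heven, intervalIntegral.integral_abs_sin_mul_cos_two_mul]
    ring
  rw [← hintegral, ofReal_integral_eq_lintegral_ofReal
    (hcont.integrableOn_Icc.mono_set Ioo_subset_Icc_self)
    (Filter.Eventually.of_forall fun θ => abs_nonneg _)]

noncomputable def xzReflection : (ℝ × ℝ × ℝ) →ₗ[ℝ] ℝ × ℝ × ℝ where
  toFun p := ((p.1 + p.2.2) / √2, p.2.1, (p.1 - p.2.2) / √2)
  map_add' p q := by ext <;> simp only [Prod.fst_add, Prod.snd_add] <;> ring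
  map_smul' c p := by
    ext <;> simp only [Prod.smul_fst, Prod.smul_snd, smul_eq_mul, RingHom.id_apply] <;> ring

theorem xzReflection_apply (p : ℝ × ℝ × ℝ) :
    xzReflection p = ((p.1 + p.2.2) / √2, p.2.1, (p.1 - p.2.2) / √2) := rfl

theorem xzReflection_involutive : Function.Involutive xzReflection := by
  intro p
  have h : √2 ^ 2 = 2 := sq_sqrt zero_le_two
  ext <;> simp only [xzReflection_apply] <;> field_simp <;> rw [h] <;> ring

theorem two_mul_mul_sub_sq_xzReflection (p : ℝ × ℝ × ℝ) :
    2 * (xzReflection p).1 * (xzReflection p).2.2 - (xzReflection p).2.1 ^ 2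
      = p.1 ^ 2 - (p.2.1 ^ 2 + p.2.2 ^ 2) := by
  have h : √2 ^ 2 = 2 := sq_sqrt zero_le_two
  simp only [xzReflection_apply]
  field_simp
  rw [h]
  ring

theorem sq_add_sq_add_sq_xzReflection (p : ℝ × ℝ × ℝ) :
    (xzReflection p).1 ^ 2 + (xzReflection p).2.1 ^ 2 + (xzReflection p).2.2 ^ 2
      = p.1 ^ 2 + (p.2.1 ^ 2 + p.2.2 ^ 2) := by
  have h : √2 ^ 2 = 2 := sq_sqrt zero_le_two
  simp only [xzReflection_apply]
  field_simp
  rw [h]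
  ring

theorem lintegral_abs_two_mul_sub_sq_mul_radial {φ : ℝ → ℝ≥0∞} (hφ : Measurable φ) :
    ∫⁻ p : ℝ × ℝ × ℝ,
        ENNReal.ofReal |2 * p.1 * p.2.2 - p.2.1 ^ 2| * φ (p.1 ^ 2 + p.2.1 ^ 2 + p.2.2 ^ 2)
      = ENNReal.ofReal π * ENNReal.ofReal ((8 * √2 - 4) / 3) *
          ∫⁻ r in Ioi 0, ENNReal.ofReal (r ^ 4) * φ (r ^ 2) := by
  have : (volume : Measure (ℝ × ℝ × ℝ)).IsAddHaarMeasure := Measure.prod.instIsAddHaarMeasure _ _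
  have hrefl : MeasurePreserving xzReflection volume volume :=
    LinearMap.measurePreserving_of_involutive volume xzReflection_involutive
  have hpolar : ∀ r > 0, ∀ θ, ENNReal.ofReal r * (ENNReal.ofReal |(polarCoord.symm (r, θ)).2| *
      (ENNReal.ofReal |(polarCoord.symm (r, θ)).1 ^ 2 - (polarCoord.symm (r, θ)).2 ^ 2| *
        φ ((polarCoord.symm (r, θ)).1 ^ 2 + (polarCoord.symm (r, θ)).2 ^ 2)))
      = ENNReal.ofReal (r ^ 4) * φ (r ^ 2) * ENNReal.ofReal |sin θ * cos (2 * θ)| := by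
    intro r hr θ
    have hsq : (r * cos θ) ^ 2 + (r * sin θ) ^ 2 = r ^ 2 := by
      linear_combination r ^ 2 * cos_sq_add_sin_sq θ
    have hdiff : (r * cos θ) ^ 2 - (r * sin θ) ^ 2 = r ^ 2 * cos (2 * θ) := by
      linear_combination (-r ^ 2) * cos_sq_add_sin_sq θ - r ^ 2 * cos_two_mul θ
    simp only [polarCoord_symm_apply]
    rw [hsq, hdiff, ← mul_assoc, ← mul_assoc, ← ENNReal.ofReal_mul hr.le,
      ← ENNReal.ofReal_mul (by positivity), abs_mul, abs_mul, abs_mul, abs_of_pos hr,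
      abs_of_nonneg (sq_nonneg r),
      show r * (r * |sin θ|) * (r ^ 2 * |cos (2 * θ)|) = r ^ 4 * (|sin θ| * |cos (2 * θ)|) by ring,
      ENNReal.ofReal_mul (by positivity)]
    ring
  calc _ = ∫⁻ p : ℝ × ℝ × ℝ, ENNReal.ofReal |p.1 ^ 2 - (p.2.1 ^ 2 + p.2.2 ^ 2)| *
          φ (p.1 ^ 2 + (p.2.1 ^ 2 + p.2.2 ^ 2)) := by
        rw [← hrefl.lintegral_comp (by fun_prop)]
        simp_rw [two_mul_mul_sub_sq_xzReflection, sq_add_sq_add_sq_xzReflection]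
    _ = ∫⁻ u, ∫⁻ q : ℝ × ℝ, ENNReal.ofReal |u ^ 2 - (q.1 ^ 2 + q.2 ^ 2)| *
          φ (u ^ 2 + (q.1 ^ 2 + q.2 ^ 2)) := by
        rw [Measure.volume_eq_prod, lintegral_prod _ (by fun_prop)]
    _ = ∫⁻ u, ENNReal.ofReal π * ∫⁻ s, ENNReal.ofReal |s| *
          (ENNReal.ofReal |u ^ 2 - s ^ 2| * φ (u ^ 2 + s ^ 2)) :=
        lintegral_congr fun u => lintegral_comp_sq_add_sq
          (g := fun t => ENNReal.ofReal |u ^ 2 - t| * φ (u ^ 2 + t)) (by fun_prop)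
    _ = ENNReal.ofReal π * ∫⁻ w : ℝ × ℝ, ENNReal.ofReal |w.2| *
          (ENNReal.ofReal |w.1 ^ 2 - w.2 ^ 2| * φ (w.1 ^ 2 + w.2 ^ 2)) := by
        rw [lintegral_const_mul _ (by fun_prop), Measure.volume_eq_prod,
          lintegral_prod _ (by fun_prop)]
    _ = _ := by
        rw [lintegral_eq_lintegral_mul_lintegral_of_polarCoord (by fun_prop) (by fun_prop) hpolar,
          lintegral_ofReal_abs_sin_mul_cos_two_mul]
        ring

theorem integral_pow_mul_exp_neg_Ioi (n : ℕ) :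
    ∫ x in Ioi (0 : ℝ), x ^ n * exp (-x) = n.factorial := by
  rw [← Real.Gamma_nat_eq_factorial, Real.Gamma_eq_integral (by positivity)]
  refine setIntegral_congr_fun measurableSet_Ioi fun x _ => ?_
  rw [add_sub_cancel_right, rpow_natCast, mul_comm]

theorem integrableOn_pow_mul_exp_neg_Ioi (n : ℕ) :
    IntegrableOn (fun x : ℝ => x ^ n * exp (-x)) (Ioi 0) := by
  refine (Real.GammaIntegral_convergent (s := n + 1) (by positivity)).congr_fun
    (fun x _ => ?_) measurableSet_Ioi
  dsimp only
  rw [add_sub_cancel_right, rpow_natCast, mul_comm]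

theorem lintegral_pow_four_mul_exp_neg_sqrt_div_sqrt :
    ∫⁻ r in Ioi 0, ENNReal.ofReal (r ^ 4) *
        ENNReal.ofReal (1 / (4 * π) * exp (-√(r ^ 2)) / √(r ^ 2))
      = ENNReal.ofReal (3 / (2 * π)) := by
  have hπ := pi_pos
  have hpt : EqOn (fun r => ENNReal.ofReal (r ^ 4) *
      ENNReal.ofReal (1 / (4 * π) * exp (-√(r ^ 2)) / √(r ^ 2)))
      (fun r => ENNReal.ofReal ((4 * π)⁻¹ * (r ^ 3 * exp (-r)))) (Ioi 0) := by
    intro r (hr : 0 < r)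
    dsimp only
    rw [← ENNReal.ofReal_mul (by positivity), sqrt_sq hr.le]
    congr 1
    field_simp
  rw [setLIntegral_congr_fun measurableSet_Ioi hpt, ← ofReal_integral_eq_lintegral_ofReal
    ((integrableOn_pow_mul_exp_neg_Ioi 3).const_mul _)
    (ae_restrict_of_forall_mem measurableSet_Ioi fun r (hr : 0 < r) => by positivity),
    integral_const_mul, integral_pow_mul_exp_neg_Ioi]
  congr 1
  norm_num [Nat.factorial]
  field_simp
  ring

/-- if `(x,y,z)` has joint density
`ρ(x,y,z) = e^{-|(x,y,z)|}/(4π |(x,y,z)|)` on `ℝ³`, then `E|2xz - y²| = 4√2 - 2`. -/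
theorem stmt3 :
    ∫ p : ℝ × ℝ × ℝ,
        |2 * p.1 * p.2.2 - p.2.1 ^ 2| *
          (1 / (4 * π) * Real.exp (-Real.sqrt (p.1 ^ 2 + p.2.1 ^ 2 + p.2.2 ^ 2)) /
            Real.sqrt (p.1 ^ 2 + p.2.1 ^ 2 + p.2.2 ^ 2))
      = 4 * Real.sqrt 2 - 2 := by
  have hπ := pi_pos
  have hangular : 0 ≤ (8 * √2 - 4) / 3 := by linarith [one_lt_sqrt_two]
  rw [integral_eq_lintegral_of_nonneg_ae (Filter.Eventually.of_forall fun p => by positivity)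
    (by fun_prop)]
  simp_rw [ENNReal.ofReal_mul (abs_nonneg _)]
  rw [lintegral_abs_two_mul_sub_sq_mul_radial
      (φ := fun t => ENNReal.ofReal (1 / (4 * π) * exp (-√t) / √t)) (by fun_prop),
    lintegral_pow_four_mul_exp_neg_sqrt_div_sqrt, ← ENNReal.ofReal_mul hπ.le,
    ← ENNReal.ofReal_mul (mul_nonneg hπ.le hangular), ENNReal.toReal_ofReal (by positivity)]
  field_simp
  ring
end

section
/- Let v⁽¹⁾, …, v⁽ⁿ⁻¹⁾ be independent random vectors in ℝ^{2n−3}, each with independent centered Gaussian entries v_j ~ N(0, C(2n−4, j−1)) for j = 1, …, 2n−3, and let Ĵ_n be the (2n−2)×(2n−2) matrix whose (2i−1)-th and (2i)-th columns are (v⁽ⁱ⁾, 0) and (0, v⁽ⁱ⁾) (the vector v⁽ⁱ⁾ shifted down by one). Then E[det Ĵ_n] = (n−1)! · ∏_{k=1}^{n−1} C(2n−4, 2k−2). -/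
open MeasureTheory ProbabilityTheory Finset
open scoped NNReal ENNReal

/-!
In the Leibniz expansion of `det Ĵ_n`, the term of a permutation `σ` is a product over the
column pairs `(2i, 2i+1)` of two entries `v⁽ⁱ⁾_a * v⁽ⁱ⁾_b` with `a = σ(2i)` and `b = σ(2i+1) - 1`.
By independence and centring, its expectation vanishes unless `a = b` for every `i`, and is then
`∏ᵢ Var v⁽ⁱ⁾_a`. The permutations with `σ(2i+1) = σ(2i) + 1` for all `i` are exactly those that
permute the pairs `{2k, 2k+1}` as blocks; they are even, and each contributes
`∏ₖ C(2n-4, 2k)`.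
-/

/-- The `(2n-2) × (2n-2)` structured matrix `Ĵ_n`: for `i = 0,…,n-2`, its
`(2i)`-th column is the vector `v i` (in rows `0,…,2n-4`) and its `(2i+1)`-th
column is the vector `v i` shifted down by one row; other entries are zero.
(0-indexed version of the matrix of the paper.) -/
def hatJ {R : Type*} [Zero R] (n : ℕ) (v : Fin (n - 1) → Fin (2 * n - 3) → R) :
    Matrix (Fin (2 * n - 2)) (Fin (2 * n - 2)) R :=
  Matrix.of fun p q =>
    if q.val % 2 = 0 then
      if hp : p.val < 2 * n - 3 then
        v ⟨q.val / 2, by have := q.isLt; omega⟩ ⟨p.val, hp⟩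
      else 0
    else
      if hp : 0 < p.val then
        v ⟨q.val / 2, by have := q.isLt; omega⟩
          ⟨p.val - 1, by have := p.isLt; omega⟩
      else 0

lemma prod_pow_ite_add_ite_eq_prod_mul {ι κ M : Type*} [Fintype ι] [Fintype κ] [DecidableEq κ]
    [CommMonoid M] (x : ι → κ → M) (a b : ι → κ) :
    ∏ p : ι × κ, x p.1 p.2 ^ ((if p.2 = a p.1 then 1 else 0) + (if p.2 = b p.1 then 1 else 0))
      = ∏ i, x i (a i) * x i (b i) := by
  rw [Fintype.prod_prod_type]
  refine Finset.prod_congr rfl fun i _ => ?_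
  simp only [pow_add, Finset.prod_mul_distrib, pow_ite, pow_one, pow_zero,
    Finset.prod_ite_eq', Finset.mem_univ, if_true]

lemma prod_ite_add_ite_eq_ite {κ M : Type*} [Fintype κ] [DecidableEq κ] [CommMonoidWithZero M]
    (F : κ → ℕ → M) (h0 : ∀ j, F j 0 = 1) (h1 : ∀ j, F j 1 = 0) (a b : κ) :
    ∏ j, F j ((if j = a then 1 else 0) + (if j = b then 1 else 0))
      = if a = b then F a 2 else 0 := by
  split_ifs with hab
  · subst hab
    rw [Finset.prod_eq_single a (fun j _ hj => by simp [hj, h0]) (by simp)]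
    simp
  · exact Finset.prod_eq_zero (Finset.mem_univ a) (by simp [hab, h1])

namespace ProbabilityTheory

section GaussianMoments

variable {Ω : Type*} [MeasurableSpace Ω] {P : Measure Ω} {X : Ω → ℝ} {m : ℝ} {V : ℝ≥0}

lemma hasLaw_of_map_eq {𝓧 : Type*} [MeasurableSpace 𝓧] {Y : Ω → 𝓧} {ν : Measure 𝓧}
    [IsProbabilityMeasure ν] (h : P.map Y = ν) : HasLaw Y ν P where
  aemeasurable := .of_map_ne_zero (h ▸ IsProbabilityMeasure.ne_zero ν)
  map_eq := h

lemma HasLaw.memLp_of_gaussianReal (hX : HasLaw X (gaussianReal m V) P) {p : ℝ≥0∞}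
    (hp : p ≠ ∞) : MemLp X p P :=
  (memLp_map_measure_iff aestronglyMeasurable_id hX.aemeasurable).1
    (hX.map_eq ▸ memLp_id_gaussianReal' p hp)

lemma HasLaw.integral_eq_of_gaussianReal (hX : HasLaw X (gaussianReal m V) P) : P[X] = m := by
  rw [hX.integral_eq, integral_id_gaussianReal]

lemma HasLaw.integral_sq_of_gaussianReal (hX : HasLaw X (gaussianReal 0 V) P) :
    ∫ ω, X ω ^ 2 ∂P = V := by
  rw [← variance_of_integral_eq_zero hX.aemeasurable hX.integral_eq_of_gaussianReal,
    hX.variance_eq, variance_id_gaussianReal]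

end GaussianMoments

/-- The integrand is the monomial `∏ w_p ^ e_p` with exponents `e_p ≤ 2`; independence factors its
expectation, and a factor with `e_p = 1` is a vanishing first moment. -/
lemma iIndepFun.integral_prod_mul_of_integral_eq_zero {Ω ι κ : Type*} [MeasurableSpace Ω]
    {μ : Measure Ω} [Fintype ι] [Fintype κ] [DecidableEq κ] (w : ι → κ → Ω → ℝ)
    (hindep : iIndepFun (fun p : ι × κ => w p.1 p.2) μ) (hmeas : ∀ i j, AEMeasurable (w i j) μ)
    (hmean : ∀ i j, μ[w i j] = 0) (a b : ι → κ) :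
    ∫ ω, ∏ i, w i (a i) ω * w i (b i) ω ∂μ
      = ∏ i, if a i = b i then ∫ ω, w i (a i) ω ^ 2 ∂μ else 0 := by
  have := hindep.isProbabilityMeasure
  set e : ι × κ → ℕ := fun p =>
    (if p.2 = a p.1 then 1 else 0) + (if p.2 = b p.1 then 1 else 0)
  calc ∫ ω, ∏ i, w i (a i) ω * w i (b i) ω ∂μ
      = ∫ ω, ∏ p : ι × κ, w p.1 p.2 ω ^ e p ∂μ := by
        congr with ω
        exact (prod_pow_ite_add_ite_eq_prod_mul (fun i j => w i j ω) a b).symm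
    _ = ∏ p : ι × κ, ∫ ω, w p.1 p.2 ω ^ e p ∂μ :=
        hindep.integral_fun_prod_comp (f := fun p x => x ^ e p) (fun p => hmeas p.1 p.2)
          fun p => (continuous_pow _).aestronglyMeasurable
    _ = ∏ i, if a i = b i then ∫ ω, w i (a i) ω ^ 2 ∂μ else 0 := by
        rw [Fintype.prod_prod_type]
        refine Finset.prod_congr rfl fun i _ => ?_
        exact prod_ite_add_ite_eq_ite (fun j k => ∫ ω, w i j ω ^ k ∂μ)
          (fun j => by simp) (fun j => by simpa using hmean i j) (a i) (b i)

end ProbabilityTheory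

section DeterminantExpectation

variable {Ω : Type*} [MeasurableSpace Ω] {μ : Measure Ω} [IsFiniteMeasure μ]

lemma integrable_finset_prod_of_memLp_card {ι : Type*} {s : Finset ι} {f : ι → Ω → ℝ}
    (hf : ∀ i ∈ s, MemLp (f i) #s μ) : Integrable (fun ω => ∏ i ∈ s, f i ω) μ := by
  rcases s.eq_empty_or_nonempty with rfl | hs
  · simp
  · rw [← memLp_one_iff_integrable]
    convert MemLp.prod' hf
    rw [Finset.sum_const, nsmul_eq_mul, ENNReal.mul_inv_cancel (by simpa using hs.ne_empty)
      (by simp), inv_one]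

lemma integral_det_eq_sum_perm {m : Type*} [Fintype m] [DecidableEq m]
    (M : Ω → Matrix m m ℝ) (hM : ∀ i j, MemLp (fun ω => M ω i j) (Fintype.card m) μ) :
    ∫ ω, (M ω).det ∂μ
      = ∑ σ : Equiv.Perm m, ((Equiv.Perm.sign σ : ℤ) : ℝ) * ∫ ω, ∏ i, M ω (σ i) i ∂μ := by
  simp_rw [Matrix.det_apply']
  rw [integral_finsetSum _ fun σ _ =>
    (integrable_finset_prod_of_memLp_card fun i _ => hM (σ i) i).const_mul _]
  simp_rw [integral_const_mul]

end DeterminantExpectation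

section ColumnPairs

variable {n : ℕ}

/-- `(i, b) ↦ 2i + b`: column `2i + b` of `hatJ` is built from the vector `v i`. -/
def pairEquiv (n : ℕ) : Fin (n - 1) × Fin 2 ≃ Fin (2 * n - 2) :=
  finProdFinEquiv.trans (finCongr (by omega))

@[simp]
lemma pairEquiv_apply_val (x : Fin (n - 1) × Fin 2) :
    (pairEquiv n x : ℕ) = 2 * x.1 + x.2 := by
  simp only [pairEquiv, Equiv.trans_apply, finCongr_apply, Fin.val_cast,
    finProdFinEquiv_apply_val]
  ring

lemma prod_eq_prod_pairEquiv {M : Type*} [CommMonoid M] (f : Fin (2 * n - 2) → M) :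
    ∏ q, f q = ∏ i, f (pairEquiv n (i, 0)) * f (pairEquiv n (i, 1)) := by
  rw [← (pairEquiv n).prod_comp, Fintype.prod_prod_type]
  simp [Fin.prod_univ_two]

def MapsPairsConsecutively (σ : Equiv.Perm (Fin (2 * n - 2))) : Prop :=
  ∀ i, (σ (pairEquiv n (i, 1)) : ℕ) = σ (pairEquiv n (i, 0)) + 1

instance : DecidablePred (MapsPairsConsecutively (n := n)) := fun σ => by
  unfold MapsPairsConsecutively
  infer_instance

def blockPerm (π : Equiv.Perm (Fin (n - 1))) : Equiv.Perm (Fin (2 * n - 2)) :=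
  (pairEquiv n).permCongr (Equiv.prodCongrLeft fun _ => π)

@[simp]
lemma blockPerm_apply_pairEquiv (π : Equiv.Perm (Fin (n - 1))) (i : Fin (n - 1)) (b : Fin 2) :
    blockPerm π (pairEquiv n (i, b)) = pairEquiv n (π i, b) := by
  simp [blockPerm, Equiv.permCongr_apply, Equiv.prodCongrLeft_apply]

lemma sign_blockPerm (π : Equiv.Perm (Fin (n - 1))) : Equiv.Perm.sign (blockPerm π) = 1 := by
  rw [blockPerm, Equiv.Perm.sign_permCongr, Equiv.Perm.sign_prodCongrLeft, Fin.prod_univ_two,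
    Int.units_mul_self]

lemma blockPerm_injective : Function.Injective (blockPerm (n := n)) := by
  intro π π' h
  refine Equiv.ext fun i => ?_
  simpa using congrArg (fun σ => (pairEquiv n).symm (σ (pairEquiv n (i, 0))) |>.1) h

lemma mapsPairsConsecutively_blockPerm (π : Equiv.Perm (Fin (n - 1))) :
    MapsPairsConsecutively (blockPerm π) := by
  intro i
  simp

/-- Induction on the value `r = σ (2i + b)`: the preimage of `r` is paired with that of `r - 1`
or of `r + 1`, which pins down its parity. -/
lemma MapsPairsConsecutively.val_mod_two {σ : Equiv.Perm (Fin (2 * n - 2))}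
    (hσ : MapsPairsConsecutively σ) (i : Fin (n - 1)) (b : Fin 2) :
    (σ (pairEquiv n (i, b)) : ℕ) % 2 = b := by
  suffices ∀ r i b, (σ (pairEquiv n (i, b)) : ℕ) = r → r % 2 = b from this _ i b rfl
  intro r
  induction r with
  | zero =>
    intro i b hib
    fin_cases b
    · rfl
    · have := hσ i
      simp_all
  | succ r ih =>
    intro i b hib
    obtain ⟨⟨j, c⟩, hjc⟩ := (pairEquiv n).surjective
      (σ.symm ⟨r, by have := (σ (pairEquiv n (i, b))).isLt; omega⟩)
    have hr : (σ (pairEquiv n (j, c)) : ℕ) = r := by simp [hjc]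
    have hrc := ih j c hr
    have hinj : ∀ x y, (σ (pairEquiv n x) : ℕ) = σ (pairEquiv n y) → x = y :=
      fun x y h => (pairEquiv n).injective (σ.injective (Fin.ext h))
    have hσj := hσ j
    have hσi := hσ i
    fin_cases c <;> fin_cases b <;> simp only [Fin.zero_eta, Fin.mk_one,
      Fin.isValue] at hrc hib hr ⊢
    · have := hinj (j, 1) (i, 0) (by omega)
      simp at this
    · omega
    · omega
    · have := hinj (j, 1) (i, 0) (by omega)
      simp at this

lemma MapsPairsConsecutively.exists_blockPerm {σ : Equiv.Perm (Fin (2 * n - 2))}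
    (hσ : MapsPairsConsecutively σ) : ∃ π, blockPerm π = σ := by
  let f : Fin (n - 1) → Fin (n - 1) := fun i => ((pairEquiv n).symm (σ (pairEquiv n (i, 0)))).1
  have hf0 : ∀ i, σ (pairEquiv n (i, 0)) = pairEquiv n (f i, 0) := by
    intro i
    set x := (pairEquiv n).symm (σ (pairEquiv n (i, 0)))
    have hx : pairEquiv n x = σ (pairEquiv n (i, 0)) := Equiv.apply_symm_apply _ _
    have hx2 : x.2 = 0 := by
      have h := hσ.val_mod_two i 0
      rw [← hx, pairEquiv_apply_val] at h
      have := x.2.isLt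
      exact Fin.ext (by omega)
    rw [← hx, ← hx2]
  have hf1 : ∀ i, σ (pairEquiv n (i, 1)) = pairEquiv n (f i, 1) := fun i =>
    Fin.ext (by simp [hσ i, hf0 i])
  have hf : f.Injective := fun i i' h =>
    congrArg Prod.fst ((pairEquiv n).injective (σ.injective ((hf0 i).trans (h ▸ (hf0 i').symm))))
  refine ⟨Equiv.ofBijective f hf.bijective_of_finite, Equiv.ext fun q => ?_⟩
  obtain ⟨⟨i, b⟩, rfl⟩ := (pairEquiv n).surjective q
  fin_cases b <;> simp only [Fin.zero_eta, Fin.mk_one, Fin.isValue]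
  · rw [blockPerm_apply_pairEquiv, Equiv.ofBijective_apply, hf0]
  · rw [blockPerm_apply_pairEquiv, Equiv.ofBijective_apply, hf1]

lemma mapsPairsConsecutively_iff {σ : Equiv.Perm (Fin (2 * n - 2))} :
    MapsPairsConsecutively σ ↔ σ ∈ Set.range blockPerm :=
  ⟨fun h => h.exists_blockPerm, fun ⟨π, hπ⟩ => hπ ▸ mapsPairsConsecutively_blockPerm π⟩

lemma sum_sign_mul_ite_mapsPairsConsecutively (g : Equiv.Perm (Fin (2 * n - 2)) → ℝ) :
    ∑ σ, ((Equiv.Perm.sign σ : ℤ) : ℝ) * (if MapsPairsConsecutively σ then g σ else 0)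
      = ∑ π, g (blockPerm π) := by
  have h : univ.filter MapsPairsConsecutively
      = univ.map ⟨blockPerm, blockPerm_injective (n := n)⟩ := by
    ext σ
    simp [mapsPairsConsecutively_iff]
  simp_rw [mul_ite, mul_zero]
  rw [← Finset.sum_filter, h, Finset.sum_map]
  simp [sign_blockPerm]

end ColumnPairs

section HatJ

variable {n : ℕ} {R : Type*} [Zero R]

lemma hatJ_apply_pairEquiv_zero (v : Fin (n - 1) → Fin (2 * n - 3) → R) (r : Fin (2 * n - 2))
    (i : Fin (n - 1)) :
    hatJ n v r (pairEquiv n (i, 0)) = if h : (r : ℕ) < 2 * n - 3 then v i ⟨r, h⟩ else 0 := by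
  simp [hatJ]

lemma hatJ_apply_pairEquiv_one (v : Fin (n - 1) → Fin (2 * n - 3) → R) (r : Fin (2 * n - 2))
    (i : Fin (n - 1)) :
    hatJ n v r (pairEquiv n (i, 1)) =
      if h : 0 < (r : ℕ) then v i ⟨r - 1, by have := r.isLt; omega⟩ else 0 := by
  have hi : (2 * (i : ℕ) + 1) / 2 = i := by omega
  simp [hatJ, hi]

lemma hatJ_apply_apply {Ω : Type*} (v : Fin (n - 1) → Fin (2 * n - 3) → Ω → R) (ω : Ω)
    (r c : Fin (2 * n - 2)) : hatJ n (fun i j => v i j ω) r c = hatJ n v r c ω := by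
  simp only [hatJ, Matrix.of_apply]
  split_ifs <;> rfl

variable {Ω : Type*} [MeasurableSpace Ω] {μ : Measure Ω}

lemma memLp_hatJ_apply {p : ℝ≥0∞} (v : Fin (n - 1) → Fin (2 * n - 3) → Ω → ℝ)
    (hv : ∀ i j, MemLp (v i j) p μ) (r c : Fin (2 * n - 2)) : MemLp (hatJ n v r c) p μ := by
  simp only [hatJ, Matrix.of_apply]
  split_ifs
  exacts [hv _ _, MemLp.zero, hv _ _, MemLp.zero]

lemma integral_prod_hatJ_perm (v : Fin (n - 1) → Fin (2 * n - 3) → Ω → ℝ)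
    (hindep : iIndepFun (fun p : Fin (n - 1) × Fin (2 * n - 3) => v p.1 p.2) μ)
    (hmeas : ∀ i j, AEMeasurable (v i j) μ) (hmean : ∀ i j, μ[v i j] = 0)
    (s : ℕ → ℝ) (hvar : ∀ i j, ∫ ω, v i j ω ^ 2 ∂μ = s j) (σ : Equiv.Perm (Fin (2 * n - 2))) :
    ∫ ω, ∏ q, hatJ n (fun i j => v i j ω) (σ q) q ∂μ
      = if MapsPairsConsecutively σ then ∏ i, s (σ (pairEquiv n (i, 0))) else 0 := by
  simp_rw [prod_eq_prod_pairEquiv (fun q => hatJ n _ (σ q) q), hatJ_apply_pairEquiv_zero,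
    hatJ_apply_pairEquiv_one]
  by_cases hin : ∀ i, (σ (pairEquiv n (i, 0)) : ℕ) < 2 * n - 3 ∧ 0 < (σ (pairEquiv n (i, 1)) : ℕ)
  · let a : Fin (n - 1) → Fin (2 * n - 3) := fun i => ⟨σ (pairEquiv n (i, 0)), (hin i).1⟩
    let b : Fin (n - 1) → Fin (2 * n - 3) := fun i =>
      ⟨σ (pairEquiv n (i, 1)) - 1, by have := (σ (pairEquiv n (i, 1))).isLt; omega⟩
    have hab : (∀ i, a i = b i) ↔ MapsPairsConsecutively σ := by
      refine forall_congr' fun i => ?_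
      simp only [a, b, Fin.ext_iff]
      have := (hin i).2
      omega
    simp_rw [dif_pos (hin _).1, dif_pos (hin _).2]
    rw [hindep.integral_prod_mul_of_integral_eq_zero v hmeas hmean a b, Fintype.prod_ite_zero]
    simp only [hvar]
    exact if_congr hab rfl rfl
  · push Not at hin
    obtain ⟨i, hi⟩ := hin
    have hnot : ¬ MapsPairsConsecutively σ := fun h => by
      have := h i
      have := (σ (pairEquiv n (i, 1))).isLt
      omega
    rw [if_neg hnot]
    refine integral_eq_zero_of_ae (ae_of_all _ fun ω => Finset.prod_eq_zero (mem_univ i) ?_)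
    by_cases h : (σ (pairEquiv n (i, 0)) : ℕ) < 2 * n - 3
    · simp [(hi h).not_gt]
    · simp [h]

end HatJ

theorem stmt8_general {Ω : Type*} [MeasurableSpace Ω] (μ : Measure Ω) [IsProbabilityMeasure μ]
    (n : ℕ)
    (v : Fin (n - 1) → Fin (2 * n - 3) → Ω → ℝ)
    (hindep : iIndepFun
      (fun p : Fin (n - 1) × Fin (2 * n - 3) => v p.1 p.2) μ)
    (hgauss : ∀ i j, μ.map (v i j) = gaussianReal 0 (Nat.choose (2 * n - 4) (j : ℕ))) :
    ∫ ω, (hatJ n (fun i j => v i j ω)).det ∂μ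
      = (Nat.factorial (n - 1) : ℝ) *
          ∏ k ∈ Finset.range (n - 1), ((Nat.choose (2 * n - 4) (2 * k) : ℕ) : ℝ) := by
  have hlaw i j : HasLaw (v i j) (gaussianReal 0 (Nat.choose (2 * n - 4) (j : ℕ))) μ :=
    hasLaw_of_map_eq (hgauss i j)
  have hentries r c :
      MemLp (fun ω => hatJ n (fun i j => v i j ω) r c) (Fintype.card (Fin (2 * n - 2))) μ := by
    simp_rw [hatJ_apply_apply]
    exact memLp_hatJ_apply v
      (fun i j => (hlaw i j).memLp_of_gaussianReal (ENNReal.natCast_ne_top _)) r c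
  rw [integral_det_eq_sum_perm _ hentries]
  simp_rw [integral_prod_hatJ_perm v hindep (fun i j => (hlaw i j).aemeasurable)
    (fun i j => (hlaw i j).integral_eq_of_gaussianReal) (fun k => (Nat.choose (2 * n - 4) k : ℝ))
    (fun i j => by simp [(hlaw i j).integral_sq_of_gaussianReal])]
  rw [sum_sign_mul_ite_mapsPairsConsecutively]
  simp only [blockPerm_apply_pairEquiv, pairEquiv_apply_val, Fin.val_zero, add_zero]
  simp_rw [Equiv.prod_comp _ fun i : Fin (n - 1) => (Nat.choose (2 * n - 4) (2 * i) : ℝ)]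
  rw [Finset.sum_const, card_univ, Fintype.card_perm, Fintype.card_fin, nsmul_eq_mul,
    Fin.prod_univ_eq_prod_range fun k => (Nat.choose (2 * n - 4) (2 * k) : ℝ)]

/-- if the entries `v i j` (`i = 1,…,n-1`, `j = 1,…,2n-3`) are
independent centered Gaussians with variances `C(2n-4, j-1)`, then
`E[det Ĵ_n] = (n-1)! · ∏_{k=1}^{n-1} C(2n-4, 2k-2)`. -/
theorem stmt8 {Ω : Type*} [MeasurableSpace Ω] (μ : Measure Ω) [IsProbabilityMeasure μ]
    (n : ℕ) (hn : 2 ≤ n)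
    (v : Fin (n - 1) → Fin (2 * n - 3) → Ω → ℝ)
    (hindep : iIndepFun
      (fun p : Fin (n - 1) × Fin (2 * n - 3) => v p.1 p.2) μ)
    (hgauss : ∀ i j, μ.map (v i j) = gaussianReal 0 (Nat.choose (2 * n - 4) (j : ℕ))) :
    ∫ ω, (hatJ n (fun i j => v i j ω)).det ∂μ
      = (Nat.factorial (n - 1) : ℝ) *
          ∏ k ∈ Finset.range (n - 1), ((Nat.choose (2 * n - 4) (2 * k) : ℕ) : ℝ) :=
  stmt8_general μ n v hindep hgauss
end

section
/- For every integer n ≥ 2, the identity ((2n−3)^{n−1}/(n−1)!) · ∏_{k=0}^{2n−3} C(2n−3, k)^{−1/2} · (n−1)! · ∏_{k=1}^{n−1} C(2n−4, 2k−2) = (2n−3)!! holds. -/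
/-!
Write `n = M + 2`. Since `C(2M+1, k) = C(2M+1, 2M+1-k)`, the product of the inverse square roots
is the inverse of `∏_{k ≤ M} C(2M+1, k)`, and the claim becomes the integer identity
`(2M+1)^(M+1) · ∏_{k ≤ M} C(2M, 2k) = (2M+1)‼ · ∏_{k ≤ M} C(2M+1, k)`.
To prove it, multiply both sides by the superfactorial `sf (2M+1) = ∏_{j ≤ 2M+1} j!`, which equals
`(2M+1)‼ · (∏_{k ≤ M} (2k)!)²`. Writing every binomial coefficient as a quotient of factorials and
pairing the factorials of complementary indices, both sides become `(2M+1)‼ · (2M+1)!^(M+1)`.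
-/

open Finset Nat

theorem Nat.superFactorial_pos (n : ℕ) : 0 < sf n := by
  rw [← prod_range_succ_factorial]
  exact prod_pos fun k _ => factorial_pos k

theorem Nat.superFactorial_two_mul_add_one (M : ℕ) :
    sf (2 * M + 1) = (2 * M + 1)‼ * (∏ k ∈ range (M + 1), (2 * k)!) ^ 2 := by
  induction M with
  | zero => rfl
  | succ M ih =>
    rw [show 2 * (M + 1) + 1 = 2 * M + 1 + 1 + 1 by ring, superFactorial_succ, superFactorial_succ,
      ih, doubleFactorial_add_two, prod_range_succ _ (M + 1), factorial_succ (2 * M + 1 + 1),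
      show 2 * (M + 1) = 2 * M + 1 + 1 by ring]
    ring

theorem Nat.prod_choose_mul_factorial_mul_factorial {s : Finset ℕ} {n : ℕ} (f : ℕ → ℕ)
    (hf : ∀ k ∈ s, f k ≤ n) :
    (∏ k ∈ s, n.choose (f k)) * (∏ k ∈ s, (f k)!) * (∏ k ∈ s, (n - f k)!) = n ! ^ #s := by
  rw [← prod_mul_distrib, ← prod_mul_distrib, ← prod_const]
  exact prod_congr rfl fun k hk => choose_mul_factorial_mul_factorial (hf k hk)

theorem Nat.prod_range_choose_mul_superFactorial (M : ℕ) :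
    (∏ k ∈ range (M + 1), (2 * M + 1).choose k) * sf (2 * M + 1) = (2 * M + 1)! ^ (M + 1) := by
  have hupper : ∏ k ∈ range (M + 1), (M + 1 + k)! = ∏ k ∈ range (M + 1), (2 * M + 1 - k)! := by
    rw [← prod_range_reflect]
    exact prod_congr rfl fun k hk => by rw [mem_range] at hk; congr 1; omega
  rw [← prod_range_succ_factorial, show 2 * M + 1 + 1 = (M + 1) + (M + 1) by ring,
    prod_range_add (fun j => j !), hupper, ← mul_assoc]
  simpa using prod_choose_mul_factorial_mul_factorial (s := range (M + 1)) (n := 2 * M + 1) id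
    fun k hk => by simp only [mem_range, id] at hk ⊢; omega

theorem Nat.prod_range_choose_two_mul_mul_sq (M : ℕ) :
    (∏ k ∈ range (M + 1), (2 * M).choose (2 * k)) * (∏ k ∈ range (M + 1), (2 * k)!) ^ 2
      = (2 * M)! ^ (M + 1) := by
  have hreflect : ∏ k ∈ range (M + 1), (2 * k)! = ∏ k ∈ range (M + 1), (2 * M - 2 * k)! := by
    rw [← prod_range_reflect]
    exact prod_congr rfl fun k hk => by rw [mem_range] at hk; congr 1; omega
  rw [sq, ← mul_assoc]
  nth_rw 2 [hreflect]
  rw [prod_choose_mul_factorial_mul_factorial (2 * ·) (fun k hk => by rw [mem_range] at hk; omega),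
    card_range]

theorem Nat.pow_mul_prod_range_choose_two_mul (M : ℕ) :
    (2 * M + 1) ^ (M + 1) * ∏ k ∈ range (M + 1), (2 * M).choose (2 * k)
      = (2 * M + 1)‼ * ∏ k ∈ range (M + 1), (2 * M + 1).choose k := by
  apply Nat.eq_of_mul_eq_mul_right (superFactorial_pos (2 * M + 1))
  calc (2 * M + 1) ^ (M + 1) * (∏ k ∈ range (M + 1), (2 * M).choose (2 * k)) * sf (2 * M + 1)
      = (2 * M + 1)‼ * ((2 * M + 1) ^ (M + 1) * (2 * M)! ^ (M + 1)) := by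
        rw [superFactorial_two_mul_add_one, ← prod_range_choose_two_mul_mul_sq]; ring
    _ = (2 * M + 1)‼ * (∏ k ∈ range (M + 1), (2 * M + 1).choose k) * sf (2 * M + 1) := by
        rw [mul_assoc, prod_range_choose_mul_superFactorial, ← mul_pow, ← factorial_succ]

theorem Finset.prod_range_choose_two_mul_add_one {α : Type*} [CommMonoid α] (f : ℕ → α) (M : ℕ) :
    ∏ k ∈ range (2 * M + 2), f ((2 * M + 1).choose k)
      = (∏ k ∈ range (M + 1), f ((2 * M + 1).choose k)) ^ 2 := by
  have hupper : ∏ k ∈ range (M + 1), f ((2 * M + 1).choose (M + 1 + k))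
      = ∏ k ∈ range (M + 1), f ((2 * M + 1).choose k) := by
    rw [← prod_range_reflect]
    refine prod_congr rfl fun k hk => ?_
    rw [mem_range] at hk
    rw [← Nat.choose_symm (by omega)]
    congr 2; omega
  rw [show 2 * M + 2 = (M + 1) + (M + 1) by ring, prod_range_add, hupper, sq]

/-- for `n ≥ 2`,
`((2n-3)^{n-1}/(n-1)!) · ∏_{k=0}^{2n-3} C(2n-3,k)^{-1/2} · (n-1)! · ∏_{k=1}^{n-1} C(2n-4,2k-2)
  = (2n-3)!!`. -/
theorem stmt9 (n : ℕ) (hn : 2 ≤ n) :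
    ((2 * n - 3 : ℕ) : ℝ) ^ (n - 1) / (Nat.factorial (n - 1) : ℝ) *
        (∏ k ∈ Finset.range (2 * n - 2), (Real.sqrt (Nat.choose (2 * n - 3) k))⁻¹) *
        (Nat.factorial (n - 1) : ℝ) *
        (∏ k ∈ Finset.range (n - 1), ((Nat.choose (2 * n - 4) (2 * k) : ℕ) : ℝ))
      = (Nat.doubleFactorial (2 * n - 3) : ℝ) := by
  obtain ⟨M, rfl⟩ : ∃ M, n = M + 2 := ⟨n - 2, by omega⟩
  rw [show 2 * (M + 2) - 3 = 2 * M + 1 by omega, show M + 2 - 1 = M + 1 by omega,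
    show 2 * (M + 2) - 2 = 2 * M + 2 by omega, show 2 * (M + 2) - 4 = 2 * M by omega]
  have hsqrt : ∏ k ∈ range (2 * M + 2), (√((2 * M + 1).choose k : ℝ))⁻¹
      = (∏ k ∈ range (M + 1), ((2 * M + 1).choose k : ℝ))⁻¹ := by
    rw [prod_range_choose_two_mul_add_one (fun c : ℕ => (√(c : ℝ))⁻¹), ← prod_pow,
      ← prod_inv_distrib]
    simp only [inv_pow, Real.sq_sqrt (Nat.cast_nonneg _)]
  have hkey := congrArg (Nat.cast (R := ℝ)) (pow_mul_prod_range_choose_two_mul M)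
  simp only [Nat.cast_mul, Nat.cast_pow, Nat.cast_prod] at hkey
  have hpos : (0 : ℝ) < ∏ k ∈ range (M + 1), ((2 * M + 1).choose k : ℝ) :=
    prod_pos fun k hk => by rw [mem_range] at hk; exact_mod_cast choose_pos (by omega)
  rw [hsqrt]
  field_simp
  linear_combination hkey
end
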